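/- Let W be a real 4×4 matrix satisfying Wᵀ·Q_D·W = Q_W. Then the sum of the entries of the second column of W is nonzero: W_{1,2} + W_{2,2} + W_{3,2} + W_{4,2} ≠ 0. (The sum of the signed curvatures of the circles of an oriented Descartes configuration cannot be zero.) -/

import Mathlib

/-! The Descartes form is `Q_D(v) = |v|² - (∑ vᵢ)² / 2`. Entry `(1, 1)` of `Wᵀ Q_D W = Q_W`
says the curvature column `c` is `Q_D`-isotropic, so `∑ cᵢ = 0` would force `|c|² = 0`, i.e.
`c = 0`; but entry `(0, 1)` says that `c` pairs to `-4` with the first column. -/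

open Matrix

/-- The matrix of the Descartes quadratic form: diagonal entries `1/2`,
off-diagonal entries `-1/2`. -/
noncomputable def QD : Matrix (Fin 4) (Fin 4) ℝ :=
  Matrix.of fun i j => if i = j then 1/2 else -1/2

/-- The matrix of the Wilker quadratic form. -/
noncomputable def QW : Matrix (Fin 4) (Fin 4) ℝ :=
  !![0, -4, 0, 0; -4, 0, 0, 0; 0, 0, 2, 0; 0, 0, 0, 2]

theorem dotProduct_QD_mulVec (v w : Fin 4 → ℝ) :
    v ⬝ᵥ QD *ᵥ w = v ⬝ᵥ w - (∑ i, v i) * (∑ i, w i) / 2 := by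
  simp only [dotProduct, mulVec, QD, one_div, of_apply, ite_mul, Fin.sum_univ_four, Fin.isValue,
    ↓reduceIte, zero_ne_one, Fin.reduceEq, one_ne_zero]
  ring

theorem eq_zero_of_QD_isotropic_of_sum_eq_zero {v : Fin 4 → ℝ}
    (hiso : v ⬝ᵥ QD *ᵥ v = 0) (hsum : ∑ i, v i = 0) : v = 0 := by
  rw [dotProduct_QD_mulVec, hsum, zero_mul, zero_div, sub_zero] at hiso
  exact dotProduct_self_eq_zero.mp hiso

theorem curvature_sum_ne_zero
    (W : Matrix (Fin 4) (Fin 4) ℝ)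
    (hW : Wᵀ * QD * W = QW) :
    W 0 1 + W 1 1 + W 2 1 + W 3 1 ≠ 0 := by
  intro hsum
  have hiso : Wᵀ 1 ⬝ᵥ QD *ᵥ Wᵀ 1 = 0 := by
    rw [← mul_mul_apply, hW]
    rfl
  have hcurv : Wᵀ 1 = 0 := by
    refine eq_zero_of_QD_isotropic_of_sum_eq_zero hiso ?_
    simpa [Fin.sum_univ_four] using hsum
  have hpair : (Wᵀ * QD * W) 0 1 = -4 := by
    rw [hW]
    rfl
  rw [mul_mul_apply, hcurv, mulVec_zero, dotProduct_zero] at hpair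
  norm_num at hpair
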